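/- arXiv:2310.00350 — 3 statements merged into one kernel-verified Lean document; each statement's English description precedes it below -/
import Mathlib

section
/- Fix an integer k ≥ 1 and t ≥ 0. The k-cluster sublevel graph G^(k)_t is nonempty and connected if and only if G*_t has exactly one connected component with at least k vertices. -/
open ENNReal

variable {V : Type*}

/-- The sublevel graph `G*_t`: edges of `G` with weight at most `t`. -/
def sublevel (G : SimpleGraph V) (W : Sym2 V → NNReal) (t : ℝ≥0∞) : SimpleGraph V where
  Adj u v := G.Adj u v ∧ (W s(u, v) : ℝ≥0∞) ≤ t
  symm := by
    constructor
    intro u v h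
    exact ⟨h.1.symm, by rw [Sym2.eq_swap]; exact h.2⟩
  loopless := ⟨fun v h => G.loopless.irrefl v h.1⟩

/-- `N_t(v)`: the number of vertices in the connected component of `v` in `G*_t`. -/
noncomputable def clusterSize (G : SimpleGraph V) (W : Sym2 V → NNReal) (t : ℝ≥0∞) (v : V) : ℕ :=
  Set.ncard {u | (sublevel G W t).Reachable v u}

/-- `τ_k(v) = inf {t : N_t(v) ≥ k}`, the `k`-cluster filtration value of a vertex. -/
noncomputable def tauV (G : SimpleGraph V) (W : Sym2 V → NNReal) (k : ℕ) (v : V) : ℝ≥0∞ :=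
  sInf {t : ℝ≥0∞ | k ≤ clusterSize G W t v}

/-- `τ_k(e) = max (τ_k(u), τ_k(v), W(e))`, the `k`-cluster filtration value of an edge. -/
noncomputable def tauEdge (G : SimpleGraph V) (W : Sym2 V → NNReal) (k : ℕ) : Sym2 V → ℝ≥0∞ :=
  Sym2.lift ⟨fun u v => max (max (tauV G W k u) (tauV G W k v)) (W s(u, v)),
    by intro u v; simp only []; rw [max_comm (tauV G W k u), Sym2.eq_swap]⟩

/-- The `k`-cluster sublevel graph `G^(k)_t`: its vertices are those `v` with
`τ_k(v) ≤ t` and its edges are those `e` with `τ_k(e) ≤ t`. -/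
def kClusterGraph (G : SimpleGraph V) (W : Sym2 V → NNReal) (k : ℕ) (t : ℝ≥0∞) :
    SimpleGraph {v : V // tauV G W k v ≤ t} where
  Adj u v := G.Adj u.1 v.1 ∧ tauEdge G W k s(u.1, v.1) ≤ t
  symm := by
    constructor
    intro u v h
    exact ⟨h.1.symm, by rw [Sym2.eq_swap]; exact h.2⟩
  loopless := ⟨fun v h => G.loopless.irrefl v.1 h.1⟩

open Filter Topology

/-! Since `W` takes finitely many values, the sublevel graph `G*_s` is constant for `s` slightly
above `t`, so the infimum defining `τ_k(v)` is attained: `τ_k(v) ≤ t ↔ k ≤ N_t(v)`. Hence `G^(k)_t`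
is the subgraph of `G*_t` induced on the union of its components with at least `k` vertices, and
a subgraph induced on a union of components is connected exactly when it is one nonempty
component. -/

namespace SimpleGraph

variable {H : SimpleGraph V}

theorem reachable_induce_iff {s : Set V} (hs : ∀ ⦃u v⦄, H.Reachable u v → u ∈ s → v ∈ s)
    {u v : s} : (H.induce s).Reachable u v ↔ H.Reachable u v := by
  refine ⟨fun h => h.map (Embedding.induce s).toHom, fun ⟨p⟩ => ?_⟩
  refine (p.induce s fun x hx => hs ?_ u.2).reachable
  obtain ⟨q, -, -⟩ := p.mem_support_iff_exists_append.1 hx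
  exact q.reachable

theorem connected_induce_iff_existsUnique {s : Set V} (P : H.ConnectedComponent → Prop)
    (hP : ∀ v, v ∈ s ↔ P (H.connectedComponentMk v)) : (H.induce s).Connected ↔ ∃! c, P c := by
  have hs : ∀ ⦃u v⦄, H.Reachable u v → u ∈ s → v ∈ s := fun u v h hu =>
    (hP v).2 (ConnectedComponent.sound h ▸ (hP u).1 hu)
  rw [connected_iff]
  constructor
  · rintro ⟨hpre, ⟨v, hv⟩⟩
    refine ⟨H.connectedComponentMk v, (hP v).1 hv, ConnectedComponent.ind fun w hw => ?_⟩
    exact ConnectedComponent.sound ((reachable_induce_iff hs).1 (hpre ⟨w, (hP w).2 hw⟩ ⟨v, hv⟩))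
  · rintro ⟨c, hc, hunique⟩
    refine ⟨fun u v => (reachable_induce_iff hs).2 ?_, ?_⟩
    · exact ConnectedComponent.exact
        ((hunique _ ((hP u).1 u.2)).trans (hunique _ ((hP v).1 v.2)).symm)
    · obtain ⟨v, rfl⟩ := c.exists_rep
      exact ⟨⟨v, (hP v).2 hc⟩⟩

end SimpleGraph

section sublevel

variable (G : SimpleGraph V) (W : Sym2 V → NNReal)

theorem sublevel_mono : Monotone (sublevel G W) :=
  fun _ _ h _ _ hadj => ⟨hadj.1, hadj.2.trans h⟩

theorem eventually_sublevel_eq [Finite V] (t : ℝ≥0∞) :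
    ∀ᶠ s in 𝓝[>] t, sublevel G W s = sublevel G W t := by
  have hweight : ∀ e : Sym2 V, ∀ᶠ s in 𝓝[>] t, (W e : ℝ≥0∞) ≤ s → (W e : ℝ≥0∞) ≤ t := by
    intro e
    rcases le_or_gt (W e : ℝ≥0∞) t with h | h
    · exact .of_forall fun _ _ => h
    · filter_upwards [Ioo_mem_nhdsGT h] with s hs hle using absurd hle (not_le.2 hs.2)
  filter_upwards [eventually_all.2 hweight, self_mem_nhdsWithin] with s hs hts
  exact le_antisymm (fun _ _ h => ⟨h.1, hs _ h.2⟩) (sublevel_mono G W hts.le)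

theorem clusterSize_mono [Finite V] (v : V) : Monotone fun t => clusterSize G W t v :=
  fun _ _ h => Set.ncard_le_ncard (fun _ hu => hu.mono (sublevel_mono G W h)) (Set.toFinite _)

theorem clusterSize_eq_ncard_supp (t : ℝ≥0∞) (v : V) :
    clusterSize G W t v = ((sublevel G W t).connectedComponentMk v).supp.ncard := by
  rw [clusterSize]
  congr 1
  ext u
  simp only [SimpleGraph.ConnectedComponent.mem_supp_iff, SimpleGraph.ConnectedComponent.eq,
    SimpleGraph.reachable_comm]
  rfl

theorem tauV_le_iff_le_clusterSize [Finite V] {t : ℝ≥0∞} (ht : t ≠ ⊤) (k : ℕ) (v : V) :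
    tauV G W k v ≤ t ↔ k ≤ clusterSize G W t v := by
  refine ⟨fun h => ?_, fun h => sInf_le h⟩
  have : (𝓝[>] t).NeBot := nhdsGT_neBot_of_exists_gt ⟨⊤, ht.lt_top⟩
  obtain ⟨s', hs', hts'⟩ := ((eventually_sublevel_eq G W t).and self_mem_nhdsWithin).exists
  obtain ⟨s, hs, hss'⟩ := sInf_lt_iff.1 (h.trans_lt hts')
  calc k ≤ clusterSize G W s v := hs
    _ ≤ clusterSize G W s' v := clusterSize_mono G W v hss'.le
    _ = clusterSize G W t v := by rw [clusterSize, hs', clusterSize]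

theorem kClusterGraph_eq_induce (k : ℕ) (t : ℝ≥0∞) :
    kClusterGraph G W k t = (sublevel G W t).induce {v | tauV G W k v ≤ t} := by
  ext u v
  simp only [kClusterGraph, SimpleGraph.comap_adj, sublevel, tauEdge, Sym2.lift_mk,
    Function.Embedding.subtype_apply, max_le_iff, u.2, v.2, true_and]

end sublevel

theorem kClusterGraph_connected_iff_general [Fintype V] (G : SimpleGraph V) (W : Sym2 V → NNReal)
    (k : ℕ) (t : NNReal) :
    (kClusterGraph G W k (t : ℝ≥0∞)).Connected ↔
      ∃! c : (sublevel G W (t : ℝ≥0∞)).ConnectedComponent, k ≤ c.supp.ncard := by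
  rw [kClusterGraph_eq_induce]
  refine SimpleGraph.connected_induce_iff_existsUnique _ fun v => ?_
  exact (tauV_le_iff_le_clusterSize G W coe_ne_top k v).trans (by rw [clusterSize_eq_ncard_supp])

/-- For `k ≥ 1` and `t ≥ 0`, the graph `G^(k)_t` is nonempty and
connected if and only if `G*_t` has exactly one connected component with at least
`k` vertices. -/
theorem kClusterGraph_connected_iff [Fintype V] (G : SimpleGraph V) (W : Sym2 V → NNReal)
    (k : ℕ) (hk : 1 ≤ k) (t : NNReal) :
    (kClusterGraph G W k (t : ℝ≥0∞)).Connected ↔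
      ∃! c : (sublevel G W (t : ℝ≥0∞)).ConnectedComponent, k ≤ c.supp.ncard :=
  kClusterGraph_connected_iff_general G W k t
end

section
/- Let G = (V, E, W) be a finite connected weighted graph and fix an integer k ≥ 1. If T is a spanning tree of G minimizing the total weight Σ_{e ∈ T} W(e) among all spanning trees of G, then T also minimizes the total weight Σ_{e ∈ T} τ_k(e) among all spanning trees of G, where τ_k is the k-cluster filtration computed in G. That is, a minimum spanning tree for the weights W is a minimum spanning tree for the weights τ_k, for every k. -/
open ENNReal

variable {V : Type*}

/-! A minimum spanning tree `T` for `W` has the cycle property: every edge `uv` of `G` outside `T`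
is at least as heavy as each edge of the `T`-path from `u` to `v`, since otherwise exchanging the
two edges would produce a lighter spanning tree. All weights along that path being `≤ W(uv)`, each
vertex `z` on it lies in the cluster of `u` from time `max (τ_k(u), W(uv))` on, so
`τ_k(z) ≤ τ_k(uv)`; hence `T` has the cycle property for `τ_k` too. Finally the cycle property
alone makes a spanning tree minimum: any other spanning tree `T'` is turned into `T` by exchanging
one edge at a time, and no exchange increases the weight. -/

namespace SimpleGraph

variable {G T : SimpleGraph V} {x y a b : V}

lemma Walk.reachable_deleteEdges_or {w : V} (q : G.Walk w x) (y : V) :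
    (G.deleteEdges {s(x, y)}).Reachable w x ∨ (G.deleteEdges {s(x, y)}).Reachable w y := by
  induction q with
  | nil => exact Or.inl (Reachable.refl _)
  | @cons c d x hcd _ ih =>
    by_cases he : s(c, d) = s(x, y)
    · rcases Sym2.eq_iff.mp he with ⟨rfl, -⟩ | ⟨rfl, -⟩
      · exact Or.inl (Reachable.refl _)
      · exact Or.inr (Reachable.refl _)
    · have hcd' : (G.deleteEdges {s(x, y)}).Adj c d := deleteEdges_adj.mpr ⟨hcd, he⟩
      exact ih.imp hcd'.reachable.trans hcd'.reachable.trans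

lemma Preconnected.reachable_deleteEdges_or (hG : G.Preconnected) (x y w : V) :
    (G.deleteEdges {s(x, y)}).Reachable x w ∨ (G.deleteEdges {s(x, y)}).Reachable y w :=
  ((hG w x).some.reachable_deleteEdges_or y).imp Reachable.symm Reachable.symm

lemma IsAcyclic.not_reachable_deleteEdges_of_mem_edges (hG : G.IsAcyclic) {u v : V}
    {p : G.Walk u v} (hp : p.IsPath) (he : s(x, y) ∈ p.edges) :
    ¬ (G.deleteEdges {s(x, y)}).Reachable u v := by
  classical
  rw [reachable_deleteEdges_iff_exists_walk]
  rintro ⟨q, hq⟩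
  have hqp : (q.toPath : G.Walk u v) = p :=
    congrArg Subtype.val ((hG.subsingleton_path u v).elim q.toPath ⟨p, hp⟩)
  exact hq (q.edges_toPath_subset_edges (hqp ▸ he))

theorem IsTree.deleteEdges_sup_edge (hT : T.IsTree) (hxy : T.Adj x y)
    (ha : (T.deleteEdges {s(x, y)}).Reachable x a)
    (hb : (T.deleteEdges {s(x, y)}).Reachable y b) :
    (T.deleteEdges {s(x, y)} ⊔ edge a b).IsTree := by
  set H := T.deleteEdges {s(x, y)}
  have hnr : ¬ H.Reachable a b := fun h =>
    isAcyclic_iff_forall_adj_isBridge.mp hT.isAcyclic hxy (ha.trans (h.trans hb.symm))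
  have hab : (H ⊔ edge a b).Adj a b :=
    Or.inr ((edge_adj ..).mpr ⟨Or.inl ⟨rfl, rfl⟩, fun h => hnr (h ▸ Reachable.refl a)⟩)
  refine ⟨(connected_iff_exists_forall_reachable _).mpr ⟨a, fun w => ?_⟩,
    (hT.isAcyclic.anti (deleteEdges_le _)).sup_edge_of_not_reachable hnr⟩
  rcases hT.connected.preconnected.reachable_deleteEdges_or x y w with h | h
  · exact (ha.symm.trans h).mono le_sup_left
  · exact hab.reachable.trans ((hb.symm.trans h).mono le_sup_left)

section Finsum

variable [Finite V] {M : Type*} [AddCommMonoid M] (f : Sym2 V → M)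

lemma finsum_edgeSet_eq_add_deleteEdges {e : Sym2 V} (he : e ∈ G.edgeSet) :
    ∑ᶠ e' ∈ G.edgeSet, f e' = f e + ∑ᶠ e' ∈ (G.deleteEdges {e}).edgeSet, f e' := by
  rw [edgeSet_deleteEdges, ← finsum_mem_insert f (fun h => h.2 rfl) (Set.toFinite _),
    Set.insert_sdiff_singleton, Set.insert_eq_of_mem he]

lemma finsum_edgeSet_sup_edge (hab : ¬ G.Reachable a b) :
    ∑ᶠ e ∈ (G ⊔ edge a b).edgeSet, f e = f s(a, b) + ∑ᶠ e ∈ G.edgeSet, f e := by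
  have hne : a ≠ b := fun h => hab (h ▸ Reachable.refl a)
  rw [edgeSet_sup, edgeSet_edge_of_ne hne, Set.union_comm, Set.singleton_union,
    finsum_mem_insert f (fun h => hab (Adj.reachable h)) (Set.toFinite _)]

end Finsum

def HasCycleProperty {α : Type*} [LE α] (T G : SimpleGraph V) (f : Sym2 V → α) : Prop :=
  ∀ ⦃u v : V⦄, G.Adj u v → s(u, v) ∉ T.edgeSet →
    ∀ p : T.Walk u v, p.IsPath → ∀ e ∈ p.edges, f e ≤ f s(u, v)

variable [Finite V] {M : Type*} [AddCommMonoid M] [PartialOrder M] {f : Sym2 V → M}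

theorem IsTree.hasCycleProperty_of_forall_finsum_le [IsOrderedCancelAddMonoid M]
    (hTG : T ≤ G) (hT : T.IsTree)
    (hmin : ∀ T' : SimpleGraph V, T' ≤ G → T'.IsTree →
      ∑ᶠ e ∈ T.edgeSet, f e ≤ ∑ᶠ e ∈ T'.edgeSet, f e) :
    T.HasCycleProperty G f := by
  intro u v huv huvT p hp e he
  induction e using Sym2.ind with | _ x y => ?_
  have hsep := hT.isAcyclic.not_reachable_deleteEdges_of_mem_edges hp he
  wlog hxu : (T.deleteEdges {s(x, y)}).Reachable x u generalizing x y
  · have hyu := (hT.connected.preconnected.reachable_deleteEdges_or x y u).resolve_left hxu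
    rw [Sym2.eq_swap] at he hsep hyu ⊢
    exact this y x he hsep hyu
  have hyv : (T.deleteEdges {s(x, y)}).Reachable y v :=
    (hT.connected.preconnected.reachable_deleteEdges_or x y v).resolve_left
      fun hxv => hsep (hxu.symm.trans hxv)
  have hxy : T.Adj x y := p.adj_of_mem_edges he
  have hle : T.deleteEdges {s(x, y)} ⊔ edge u v ≤ G :=
    sup_le ((deleteEdges_le _).trans hTG) ((edge_le_iff _).mpr (Or.inr huv))
  have hexch := hmin _ hle (hT.deleteEdges_sup_edge hxy hxu hyv)
  rw [finsum_edgeSet_eq_add_deleteEdges f (T.mem_edgeSet.mpr hxy),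
    finsum_edgeSet_sup_edge f hsep] at hexch
  exact le_of_add_le_add_right hexch

theorem Connected.exists_exchange_of_hasCycleProperty [IsOrderedAddMonoid M]
    {T' : SimpleGraph V} (hTG : T ≤ G) (hT : T.Connected) (hf : T.HasCycleProperty G f)
    (hT'G : T' ≤ G) (hT' : T'.IsTree) {u v : V} (huv : T'.Adj u v)
    (huvT : s(u, v) ∉ T.edgeSet) :
    ∃ T'' ≤ G, T''.IsTree ∧ T''.edgeSet \ T.edgeSet = (T'.edgeSet \ T.edgeSet) \ {s(u, v)} ∧
      ∑ᶠ e ∈ T''.edgeSet, f e ≤ ∑ᶠ e ∈ T'.edgeSet, f e := by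
  obtain ⟨p, hp⟩ := hT.exists_isPath u v
  set H := T'.deleteEdges {s(u, v)}
  have hsep : ¬ H.Reachable u v := isAcyclic_iff_forall_adj_isBridge.mp hT'.isAcyclic huv
  obtain ⟨d, hd, hud, hud'⟩ :=
    p.exists_boundary_dart {z | H.Reachable u z} (Reachable.refl u) hsep
  have hvd : H.Reachable v d.snd :=
    (hT'.connected.preconnected.reachable_deleteEdges_or u v _).resolve_left hud'
  have hdT : d.edge ∈ T.edgeSet := d.adj
  refine ⟨H ⊔ edge d.fst d.snd,
    sup_le ((deleteEdges_le _).trans hT'G) ((edge_le_iff _).mpr (Or.inr (hTG d.adj))),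
    hT'.deleteEdges_sup_edge huv hud hvd, ?_, ?_⟩
  · rw [edgeSet_sup, edgeSet_edge_of_ne d.fst_ne_snd, edgeSet_deleteEdges]
    ext e
    simp only [Set.mem_sdiff, Set.mem_union, Set.mem_singleton_iff]
    constructor
    · rintro ⟨he | rfl, heT⟩
      · exact ⟨⟨he.1, heT⟩, he.2⟩
      · exact absurd hdT heT
    · exact fun ⟨⟨he, heT⟩, heuv⟩ => ⟨Or.inl ⟨he, heuv⟩, heT⟩
  · rw [finsum_edgeSet_sup_edge f fun h => hud' (hud.trans h),
      finsum_edgeSet_eq_add_deleteEdges f (T'.mem_edgeSet.mpr huv)]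
    exact add_le_add_left
      (hf (hT'G huv) huvT p hp _ (p.edges_eq_map_darts ▸ List.mem_map_of_mem hd)) _

theorem IsTree.finsum_le_of_hasCycleProperty [IsOrderedAddMonoid M] (hTG : T ≤ G)
    (hT : T.IsTree) (hf : T.HasCycleProperty G f) {T' : SimpleGraph V} (hT'G : T' ≤ G)
    (hT' : T'.IsTree) : ∑ᶠ e ∈ T.edgeSet, f e ≤ ∑ᶠ e ∈ T'.edgeSet, f e := by
  induction hn : (T'.edgeSet \ T.edgeSet).ncard generalizing T' with
  | zero =>
    have hle : T' ≤ T := edgeSet_subset_edgeSet.mp <| Set.sdiff_eq_empty.mp <|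
      (Set.ncard_eq_zero (Set.toFinite _)).mp hn
    rw [(isTree_iff_maximal_isAcyclic.mp hT').2.eq_of_le hT.isAcyclic hle]
  | succ n ih =>
    obtain ⟨e, heT', heT⟩ :=
      Set.nonempty_of_ncard_ne_zero (s := T'.edgeSet \ T.edgeSet) (by omega)
    induction e using Sym2.ind with | _ u v => ?_
    obtain ⟨T'', hT''G, hT'', hdiff, hsum⟩ :=
      hT.connected.exists_exchange_of_hasCycleProperty hTG hf hT'G hT' heT' heT
    refine (ih hT''G hT'' ?_).trans hsum
    rw [hdiff, Set.ncard_sdiff_singleton_of_mem (Set.mem_sdiff_of_mem heT' heT), hn,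
      Nat.add_sub_cancel]

end SimpleGraph

section KCluster

variable {G T : SimpleGraph V} {W : Sym2 V → NNReal} {k : ℕ}

lemma sublevel_mono_s7 {s t : ℝ≥0∞} (h : s ≤ t) : sublevel G W s ≤ sublevel G W t :=
  fun _ _ hst => ⟨hst.1, hst.2.trans h⟩

lemma SimpleGraph.Walk.reachable_sublevel {u a : V} (q : G.Walk u a) {c : ℝ≥0∞}
    (hq : ∀ e ∈ q.edges, (W e : ℝ≥0∞) ≤ c) : (sublevel G W c).Reachable u a :=
  ⟨q.transfer _ fun e he => by
    induction e using Sym2.ind with | _ x y => exact ⟨q.adj_of_mem_edges he, hq _ he⟩⟩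

lemma tauV_le_of_walk [Finite V] {u a : V} (q : G.Walk u a) {c : ℝ≥0∞}
    (hq : ∀ e ∈ q.edges, (W e : ℝ≥0∞) ≤ c) :
    tauV G W k a ≤ tauV G W k u ⊔ c := by
  rw [tauV, tauV, sInf_sup_eq]
  refine le_iInf₂ fun s hs => sInf_le ?_
  have hua : (sublevel G W (s ⊔ c)).Reachable u a :=
    q.reachable_sublevel fun e he => (hq e he).trans le_sup_right
  have hsub :
      {x | (sublevel G W s).Reachable u x} ⊆ {x | (sublevel G W (s ⊔ c)).Reachable a x} :=
    fun x hx => hua.symm.trans (hx.mono (sublevel_mono_s7 le_sup_left))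
  exact hs.trans (Set.ncard_le_ncard hsub (Set.toFinite _))

theorem hasCycleProperty_tauEdge [Finite V] (hTG : T ≤ G)
    (hW : T.HasCycleProperty G W) : T.HasCycleProperty G (tauEdge G W k) := by
  classical
  intro u v huv huvT p hp e he
  have hWp : ∀ e ∈ p.edges, (W e : ℝ≥0∞) ≤ W s(u, v) :=
    fun e he => ENNReal.coe_le_coe.mpr (hW huv huvT p hp e he)
  have hvert : ∀ z ∈ p.support, tauV G W k z ≤ tauV G W k u ⊔ W s(u, v) := fun z hz =>
    tauV_le_of_walk ((p.takeUntil z hz).mapLe hTG) fun e he' => hWp e <|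
      p.edges_takeUntil_subset_edges hz (by simpa using he')
  induction e using Sym2.ind with | _ a b => ?_
  have hu : tauV G W k u ⊔ W s(u, v) ≤ tauEdge G W k s(u, v) :=
    sup_le (le_sup_left.trans le_sup_left) le_sup_right
  exact sup_le (sup_le ((hvert a (p.fst_mem_support_of_mem_edges he)).trans hu)
    ((hvert b (p.snd_mem_support_of_mem_edges he)).trans hu)) ((hWp _ he).trans le_sup_right)

end KCluster

theorem mst_for_kCluster_filtration_general [Fintype V] (G : SimpleGraph V) (W : Sym2 V → NNReal)
    (k : ℕ)
    (T : SimpleGraph V) (hTG : T ≤ G) (hT : T.IsTree)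
    (hmin : ∀ T' : SimpleGraph V, T' ≤ G → T'.IsTree →
      ∑ᶠ e ∈ T.edgeSet, W e ≤ ∑ᶠ e ∈ T'.edgeSet, W e) :
    ∀ T' : SimpleGraph V, T' ≤ G → T'.IsTree →
      ∑ᶠ e ∈ T.edgeSet, tauEdge G W k e ≤ ∑ᶠ e ∈ T'.edgeSet, tauEdge G W k e :=
  fun _ hT'G hT' => hT.finsum_le_of_hasCycleProperty hTG
    (hasCycleProperty_tauEdge hTG (hT.hasCycleProperty_of_forall_finsum_le hTG hmin)) hT'G hT'

/-- For a finite connected weighted graph `G` and `k ≥ 1`: a spanning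
tree `T` of `G` minimizing the total weight `Σ_{e ∈ T} W(e)` also minimizes the total
weight `Σ_{e ∈ T} τ_k(e)` among all spanning trees of `G`. -/
theorem mst_for_kCluster_filtration [Fintype V] (G : SimpleGraph V) (W : Sym2 V → NNReal)
    (k : ℕ) (hk : 1 ≤ k) (hG : G.Connected)
    (T : SimpleGraph V) (hTG : T ≤ G) (hT : T.IsTree)
    (hmin : ∀ T' : SimpleGraph V, T' ≤ G → T'.IsTree →
      ∑ᶠ e ∈ T.edgeSet, W e ≤ ∑ᶠ e ∈ T'.edgeSet, W e) :
    ∀ T' : SimpleGraph V, T' ≤ G → T'.IsTree →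
      ∑ᶠ e ∈ T.edgeSet, tauEdge G W k e ≤ ∑ᶠ e ∈ T'.edgeSet, tauEdge G W k e :=
  mst_for_kCluster_filtration_general G W k T hTG hT hmin
end

section
/- Fix an integer k ≥ 1 and let w : ℕ → ℝ with w(n) → ∞ and w(n) = o(log log n). If p = p(n) satisfies n·p(n) = (1/k)(log n + (k−1) log log n) − w(n), then P(N_k > 0) → 1 as n → ∞, where N_k is the number of connected components of G(n,p) with exactly k vertices. -/
open MeasureTheory Filter ENNReal

/-- The Erdős–Rényi measure `G(n,p)`: the product Bernoulli(`p`) measure, one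
independent coordinate for each of the `C(n,2)` possible edges (non-diagonal
unordered pairs) of a graph on `n` labeled vertices. -/
noncomputable def erMeasure (n : ℕ) (p : ℝ) :
    Measure ({e : Sym2 (Fin n) // ¬ e.IsDiag} → Bool) :=
  Measure.pi fun _ => (PMF.bernoulli (min (Real.toNNReal p) 1) (min_le_right _ _)).toMeasure

/-- The random graph associated to an outcome `ω`: the simple graph on `Fin n`
whose edges are those pairs with indicator `true`. -/
def erGraph (n : ℕ) (ω : {e : Sym2 (Fin n) // ¬ e.IsDiag} → Bool) : SimpleGraph (Fin n) :=
  SimpleGraph.fromEdgeSet {e : Sym2 (Fin n) | ∃ h : ¬ e.IsDiag, ω ⟨e, h⟩ = true}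

/-- `N_j(H)`: the number of connected components of `H` with exactly `j` vertices. -/
noncomputable def numCompsEq {V : Type*} (H : SimpleGraph V) (j : ℕ) : ℕ :=
  Set.ncard {c : H.ConnectedComponent | c.supp.ncard = j}

/-- A finite graph is `k`-cluster connected if it has exactly one connected component
with at least `k` vertices. -/
def kClusterConnected {V : Type*} (H : SimpleGraph V) (k : ℕ) : Prop :=
  ∃! c : H.ConnectedComponent, k ≤ c.supp.ncard

/-!
For a `k`-set `S` of vertices let `A_S` (`starComponentEvent S`) be the event that the edges
from the least vertex of `S` to the other vertices of `S` are present and every other edge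
meeting `S` is absent; on `A_S` the set `S` is a component with `k` vertices. Then
`P(A_S) ≥ p^(k-1) (1-p)^(kn)`, so the expected number `E` of such events is at least
`C(n,k) p^(k-1) (1-p)^(kn)`, which by the choice of `p` is of order `e^(k w(n)) → ∞`. Two such
events for distinct overlapping sets are disjoint, and for disjoint sets they prescribe at most
`k²` common absent edges, so `P(A_S ∩ A_T) ≤ (1-p)^(-k²) P(A_S) P(A_T)`. The second-moment
inequality `(∑ P(A_S))² ≤ (∑ P(A_S ∩ A_T)) P(⋃ A_S)` then yields
`P(N_k > 0) ≥ (1/E + (1-p)^(-k²))⁻¹ → 1`.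
-/

open Finset
open scoped Topology

section BoolCylinder

variable {ι : Type*}

def boolCylinder (P F : Finset ι) : Set (ι → Bool) :=
  {ω | (∀ i ∈ P, ω i = true) ∧ ∀ i ∈ F, ω i = false}

theorem boolCylinder_inter [DecidableEq ι] (P F P' F' : Finset ι) :
    boolCylinder P F ∩ boolCylinder P' F' = boolCylinder (P ∪ P') (F ∪ F') := by
  ext ω
  simp only [boolCylinder, Set.mem_inter_iff, Set.mem_ofPred_eq, mem_union, or_imp, forall_and]
  tauto

theorem boolCylinder_eq_pi [DecidableEq ι] (P F : Finset ι) (h : Disjoint P F) :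
    boolCylinder P F =
      Set.univ.pi fun i => if i ∈ P then {true} else if i ∈ F then {false} else Set.univ := by
  ext ω
  simp only [boolCylinder, Set.mem_ofPred_eq, Set.mem_pi, Set.mem_univ, true_implies]
  refine ⟨fun ⟨hP, hF⟩ i => ?_, fun hω => ⟨fun i hi => ?_, fun i hi => ?_⟩⟩
  · split_ifs with hiP hiF
    exacts [hP i hiP, hF i hiF, trivial]
  · simpa [hi] using hω i
  · simpa [hi, disjoint_right.mp h hi] using hω i

theorem pi_boolCylinder [Fintype ι] [DecidableEq ι] (ν : Measure Bool) [IsProbabilityMeasure ν]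
    (P F : Finset ι) (h : Disjoint P F) :
    Measure.pi (fun _ : ι => ν) (boolCylinder P F) = ν {true} ^ #P * ν {false} ^ #F := by
  rw [boolCylinder_eq_pi P F h, Measure.pi_pi]
  simp only [apply_ite ν, measure_univ]
  rw [prod_ite, prod_ite, prod_const, prod_const, prod_const_one, mul_one]
  congr 3
  · ext i; simp
  · ext i; simpa using fun hi => disjoint_right.mp h hi

end BoolCylinder

section SecondMoment

variable {Ω ι : Type*} [MeasurableSpace Ω] (μ : Measure Ω)

theorem lintegral_sq_le_lintegral_sq_mul_measure {f : Ω → ℝ≥0∞} (hf : AEMeasurable f μ)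
    {B : Set Ω} (hB : MeasurableSet B) (hfB : ∀ ω ∉ B, f ω = 0) :
    (∫⁻ ω, f ω ∂μ) ^ 2 ≤ (∫⁻ ω, f ω ^ 2 ∂μ) * μ B := by
  have hfg : (fun ω => f ω) = f * B.indicator 1 := by
    ext ω
    by_cases hω : ω ∈ B <;> simp [hω, hfB]
  have holder := ENNReal.lintegral_mul_le_Lp_mul_Lq μ Real.HolderConjugate.two_two hf
    ((measurable_one.indicator hB).aemeasurable)
  rw [← hfg] at holder
  have hg : ∫⁻ ω, B.indicator 1 ω ^ 2 ∂μ = μ B := by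
    rw [← lintegral_indicator_one hB]
    congr 1 with ω
    by_cases hω : ω ∈ B <;> simp [hω]
  simp only [ENNReal.rpow_two, hg] at holder
  calc (∫⁻ ω, f ω ∂μ) ^ 2
      ≤ ((∫⁻ ω, f ω ^ 2 ∂μ) ^ (1 / 2 : ℝ) * μ B ^ (1 / 2 : ℝ)) ^ 2 := by gcongr
    _ = (∫⁻ ω, f ω ^ 2 ∂μ) * μ B := by
      rw [mul_pow, ← ENNReal.rpow_natCast, ← ENNReal.rpow_natCast (μ B ^ _),
        ← ENNReal.rpow_mul, ← ENNReal.rpow_mul]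
      norm_num

theorem sq_sum_measure_le_sum_measure_inter_mul (I : Finset ι) {A : ι → Set Ω}
    (hA : ∀ i, MeasurableSet (A i)) :
    (∑ i ∈ I, μ (A i)) ^ 2 ≤ (∑ i ∈ I, ∑ j ∈ I, μ (A i ∩ A j)) * μ (⋃ i ∈ I, A i) := by
  have hmeas : ∀ i, Measurable ((A i).indicator (1 : Ω → ℝ≥0∞)) :=
    fun i => measurable_one.indicator (hA i)
  have key := lintegral_sq_le_lintegral_sq_mul_measure μ
    (f := fun ω => ∑ i ∈ I, (A i).indicator 1 ω)
    (Finset.measurable_sum I fun i _ => hmeas i).aemeasurable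
    (Finset.measurableSet_biUnion I fun i _ => hA i) (fun ω hω => Finset.sum_eq_zero fun i hi =>
      Set.indicator_of_notMem (fun h => hω (Set.mem_biUnion hi h)) _)
  convert key using 2
  · rw [lintegral_finsetSum _ fun i _ => hmeas i]
    simp_rw [lintegral_indicator_one (hA _)]
  · simp_rw [sq, Finset.sum_mul_sum]
    have hind : ∀ i j ω, (A i).indicator 1 ω * (A j).indicator 1 ω =
        (A i ∩ A j).indicator (1 : Ω → ℝ≥0∞) ω := fun i j ω => by
      rw [Set.inter_indicator_one]; rfl
    simp_rw [hind]
    rw [lintegral_finsetSum _ fun i _ => ?_]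
    · refine Finset.sum_congr rfl fun i _ => ?_
      rw [lintegral_finsetSum _ fun j _ => ?_]
      · simp_rw [lintegral_indicator_one ((hA i).inter (hA _))]
      · exact measurable_one.indicator ((hA i).inter (hA j))
    · exact Finset.measurable_sum I fun j _ => measurable_one.indicator ((hA i).inter (hA j))

theorem sum_measure_inter_le_of_pairwise_le [DecidableEq ι] (I : Finset ι) {A : ι → Set Ω}
    {c : ℝ≥0∞} (hc : ∀ i ∈ I, ∀ j ∈ I, i ≠ j → μ (A i ∩ A j) ≤ c * μ (A i) * μ (A j)) :
    ∑ i ∈ I, ∑ j ∈ I, μ (A i ∩ A j) ≤ ∑ i ∈ I, μ (A i) + c * (∑ i ∈ I, μ (A i)) ^ 2 := by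
  have hpoint : ∀ i ∈ I, ∀ j ∈ I,
      μ (A i ∩ A j) ≤ (if i = j then μ (A i) else 0) + c * μ (A i) * μ (A j) := by
    intro i hi j hj
    by_cases hij : i = j
    · simp [hij]
    · simpa [hij] using hc i hi j hj hij
  calc ∑ i ∈ I, ∑ j ∈ I, μ (A i ∩ A j)
      ≤ ∑ i ∈ I, ∑ j ∈ I, ((if i = j then μ (A i) else 0) + c * μ (A i) * μ (A j)) :=
        Finset.sum_le_sum fun i hi => Finset.sum_le_sum fun j hj => hpoint i hi j hj
    _ = ∑ i ∈ I, μ (A i) + c * (∑ i ∈ I, μ (A i)) ^ 2 := by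
        simp_rw [Finset.sum_add_distrib, Finset.sum_ite_eq, sq, Finset.sum_mul_sum,
          Finset.mul_sum, mul_assoc]
        simp

theorem inv_inv_add_le_measure_biUnion [IsFiniteMeasure μ] (I : Finset ι) {A : ι → Set Ω}
    (hA : ∀ i, MeasurableSet (A i)) {c : ℝ≥0∞}
    (hc : ∀ i ∈ I, ∀ j ∈ I, i ≠ j → μ (A i ∩ A j) ≤ c * μ (A i) * μ (A j)) :
    ((∑ i ∈ I, μ (A i))⁻¹ + c)⁻¹ ≤ μ (⋃ i ∈ I, A i) := by
  classical
  set s := ∑ i ∈ I, μ (A i)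
  rcases eq_or_ne s 0 with hs0 | hs0
  · simp [hs0]
  have hstop : s ≠ ⊤ := ENNReal.sum_ne_top.mpr fun i _ => measure_ne_top μ (A i)
  have hsq : s ^ 2 * 1 ≤ s ^ 2 * ((s⁻¹ + c) * μ (⋃ i ∈ I, A i)) := by
    have hfactor : s + c * s ^ 2 = s ^ 2 * (s⁻¹ + c) := by
      rw [mul_add, sq, mul_assoc, ENNReal.mul_inv_cancel hs0 hstop, ← sq]; ring
    rw [mul_one, ← mul_assoc, ← hfactor]
    exact (sq_sum_measure_le_sum_measure_inter_mul μ I hA).trans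
      (by gcongr; exact sum_measure_inter_le_of_pairwise_le μ I hc)
  have hone := (ENNReal.mul_le_mul_iff_right (pow_ne_zero 2 hs0) (pow_ne_top hstop)).mp hsq
  calc (s⁻¹ + c)⁻¹ = (s⁻¹ + c)⁻¹ * 1 := (mul_one _).symm
    _ ≤ (s⁻¹ + c)⁻¹ * ((s⁻¹ + c) * μ (⋃ i ∈ I, A i)) := by gcongr
    _ ≤ μ (⋃ i ∈ I, A i) := by
        rw [← mul_assoc]
        exact mul_le_of_le_one_left' (ENNReal.inv_mul_le_one _)

end SecondMoment

section Asymptotics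

theorem tendsto_log_pow_div_natCast (m : ℕ) :
    Tendsto (fun n : ℕ => Real.log n ^ m / n) atTop (𝓝 0) := by
  have := (Real.tendsto_pow_log_div_mul_add_atTop 1 0 m one_ne_zero).comp
    tendsto_natCast_atTop_atTop
  simpa only [one_mul, add_zero, Function.comp_def] using this

theorem tendsto_log_natCast_atTop : Tendsto (fun n : ℕ => Real.log n) atTop atTop :=
  Real.tendsto_log_atTop.comp tendsto_natCast_atTop_atTop

theorem exp_neg_mul_div_le_one_sub_pow {q : ℝ} (hq1 : q < 1) (m : ℕ) :
    Real.exp (-(m * q / (1 - q))) ≤ (1 - q) ^ m := by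
  have hq : 0 < 1 - q := sub_pos.mpr hq1
  have hlog : -(q / (1 - q)) ≤ Real.log (1 - q) := by
    have := Real.one_sub_inv_le_log_of_pos hq
    rwa [show 1 - (1 - q)⁻¹ = -(q / (1 - q)) by field_simp; ring] at this
  rw [← Real.exp_log (pow_pos hq m), Real.log_pow, Real.exp_le_exp]
  calc -(m * q / (1 - q)) = m * -(q / (1 - q)) := by ring
    _ ≤ m * Real.log (1 - q) := by gcongr

theorem le_choose_mul_pow_mul_one_sub_pow {q : ℝ} (hq0 : 0 ≤ q) (hq1 : q < 1) (n k : ℕ) :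
    ((n + 1 - k : ℕ) : ℝ) ^ k / k.factorial * q ^ (k - 1) * Real.exp (-(↑(k * n) * q / (1 - q))) ≤
      n.choose k * q ^ (k - 1) * (1 - q) ^ (k * n) := by
  gcongr
  · exact Nat.pow_le_choose k n
  · exact exp_neg_mul_div_le_one_sub_pow hq1 _

theorem tendsto_natCast_add_one_sub_div (k : ℕ) :
    Tendsto (fun n : ℕ => ((n + 1 - k : ℕ) : ℝ) / n) atTop (𝓝 1) := by
  have h := (tendsto_const_div_atTop_nhds_zero_nat (1 - k : ℝ)).const_add 1
  rw [add_zero] at h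
  refine h.congr' ?_
  filter_upwards [eventually_ge_atTop k, eventually_gt_atTop 0] with n hkn hn
  rw [Nat.cast_sub (by omega)]
  push_cast
  field_simp
  ring

variable {k : ℕ} {p w : ℕ → ℝ}

theorem tendsto_natCast_mul_div_log (hk : 1 ≤ k)
    (hwo : w =o[atTop] fun n : ℕ => Real.log (Real.log n))
    (hΛ : ∀ᶠ n : ℕ in atTop, (n : ℝ) * p n =
      (1 / (k : ℝ)) * (Real.log n + ((k : ℝ) - 1) * Real.log (Real.log n)) - w n) :
    Tendsto (fun n : ℕ => n * p n / Real.log n) atTop (𝓝 (1 / k)) := by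
  have hloglog := Real.isLittleO_log_id_atTop.comp_tendsto tendsto_log_natCast_atTop
  have hlim : Tendsto (fun n : ℕ => 1 / (k : ℝ) * (1 + ((k : ℝ) - 1) *
      (Real.log (Real.log n) / Real.log n)) - w n / Real.log n) atTop (𝓝 (1 / k)) := by
    simpa using ((hloglog.tendsto_div_nhds_zero.const_mul ((k : ℝ) - 1)).const_add 1 |>.const_mul
      (1 / (k : ℝ))).sub (hwo.trans hloglog).tendsto_div_nhds_zero
  refine hlim.congr' ?_
  filter_upwards [hΛ, tendsto_log_natCast_atTop.eventually_gt_atTop 0] with n hn hL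
  rw [hn]
  field_simp

theorem tendsto_zero_of_tendsto_mul_div_log {c : ℝ}
    (h : Tendsto (fun n : ℕ => n * p n / Real.log n) atTop (𝓝 c)) :
    Tendsto p atTop (𝓝 0) := by
  have := h.mul (tendsto_log_pow_div_natCast 1)
  rw [mul_zero] at this
  refine this.congr' ?_
  filter_upwards [tendsto_log_natCast_atTop.eventually_gt_atTop 0,
    eventually_gt_atTop 0] with n hL hn
  field_simp

theorem tendsto_natCast_mul_sq_of_tendsto_mul_div_log {c : ℝ}
    (h : Tendsto (fun n : ℕ => n * p n / Real.log n) atTop (𝓝 c)) :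
    Tendsto (fun n : ℕ => n * p n ^ 2) atTop (𝓝 0) := by
  have := (h.pow 2).mul (tendsto_log_pow_div_natCast 2)
  rw [mul_zero] at this
  refine this.congr' ?_
  filter_upwards [tendsto_log_natCast_atTop.eventually_gt_atTop 0,
    eventually_gt_atTop 0] with n hL hn
  field_simp

theorem eventually_le_choose_mul_pow_mul_one_sub_pow (hk : 1 ≤ k)
    (hΛ : ∀ᶠ n : ℕ in atTop, (n : ℝ) * p n =
      (1 / (k : ℝ)) * (Real.log n + ((k : ℝ) - 1) * Real.log (Real.log n)) - w n)
    (hp : ∀ᶠ n in atTop, p n ∈ Set.Ico 0 1) :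
    ∀ᶠ n : ℕ in atTop,
      (((n + 1 - k : ℕ) : ℝ) / n) ^ k / k.factorial * (n * p n / Real.log n) ^ (k - 1) *
          Real.exp (-(k * (n * p n ^ 2) / (1 - p n))) * Real.exp (k * w n) ≤
        n.choose k * p n ^ (k - 1) * (1 - p n) ^ (k * n) := by
  filter_upwards [hΛ, hp, tendsto_log_natCast_atTop.eventually_gt_atTop 0,
    eventually_gt_atTop 0] with n hΛn ⟨hp0, hp1⟩ hL hn
  have hn' : (0 : ℝ) < n := by exact_mod_cast hn
  have hk' : ((k : ℝ) - 1) = ((k - 1 : ℕ) : ℝ) := by rw [Nat.cast_sub hk, Nat.cast_one]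
  have hkw : Real.exp (k * w n) =
      n * Real.log n ^ (k - 1) * Real.exp (-(k * (n * p n))) := by
    have : (k : ℝ) * w n = Real.log n + ((k - 1 : ℕ) : ℝ) * Real.log (Real.log n) -
        k * (n * p n) := by
      rw [hΛn, ← hk']; field_simp; ring
    rw [this, Real.exp_sub, Real.exp_add, Real.exp_nat_mul, Real.exp_log hn', Real.exp_log hL,
      Real.exp_neg, div_eq_mul_inv]
  refine le_trans (le_of_eq ?_) (le_choose_mul_pow_mul_one_sub_pow hp0 hp1 n k)
  have hsplit : -(↑(k * n) * p n / (1 - p n)) =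
      -(k * (n * p n ^ 2) / (1 - p n)) + -(k * (n * p n)) := by
    have : 1 - p n ≠ 0 := by linarith
    push_cast; field_simp; ring
  have hn_pow : (n : ℝ) ^ k = n * n ^ (k - 1) := by rw [← pow_succ', Nat.sub_add_cancel hk]
  rw [hkw, hsplit, Real.exp_add, div_pow, div_pow, hn_pow, mul_pow]
  field_simp

theorem eventually_mem_Ico_of_tendsto_mul_div_log {c : ℝ} (hc : 0 < c)
    (h : Tendsto (fun n : ℕ => n * p n / Real.log n) atTop (𝓝 c)) :
    ∀ᶠ n in atTop, p n ∈ Set.Ico 0 1 := by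
  filter_upwards [h.eventually (eventually_gt_nhds hc),
    (tendsto_zero_of_tendsto_mul_div_log h).eventually (eventually_lt_nhds one_pos),
    tendsto_log_natCast_atTop.eventually_gt_atTop 0] with n hpos hlt hL
  exact ⟨(pos_of_mul_pos_right ((div_pos_iff_of_pos_right hL).mp hpos) n.cast_nonneg).le, hlt⟩

theorem tendsto_choose_mul_pow_mul_one_sub_pow_atTop (hk : 1 ≤ k) (hw : Tendsto w atTop atTop)
    (hwo : w =o[atTop] fun n : ℕ => Real.log (Real.log n))
    (hΛ : ∀ᶠ n : ℕ in atTop, (n : ℝ) * p n =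
      (1 / (k : ℝ)) * (Real.log n + ((k : ℝ) - 1) * Real.log (Real.log n)) - w n) :
    Tendsto (fun n : ℕ => n.choose k * p n ^ (k - 1) * (1 - p n) ^ (k * n)) atTop atTop := by
  have hkpos : (0 : ℝ) < k := by exact_mod_cast hk
  have hratio := tendsto_natCast_mul_div_log hk hwo hΛ
  have hp := tendsto_zero_of_tendsto_mul_div_log hratio
  have hfactor : Tendsto (fun n : ℕ => (((n + 1 - k : ℕ) : ℝ) / n) ^ k / k.factorial *
      (n * p n / Real.log n) ^ (k - 1) * Real.exp (-(k * (n * p n ^ 2) / (1 - p n))))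
      atTop (𝓝 (1 ^ k / k.factorial * (1 / k) ^ (k - 1) * Real.exp (-(k * 0 / (1 - 0))))) :=
    ((((tendsto_natCast_add_one_sub_div k).pow k).div_const _).mul (hratio.pow (k - 1))).mul
      (Real.continuous_exp.tendsto _ |>.comp
        (((tendsto_natCast_mul_sq_of_tendsto_mul_div_log hratio).const_mul _).div
          (hp.const_sub 1) (by norm_num)).neg)
  refine tendsto_atTop_mono' atTop
    (eventually_le_choose_mul_pow_mul_one_sub_pow hk hΛ
      (eventually_mem_Ico_of_tendsto_mul_div_log (by positivity) hratio))
    (hfactor.pos_mul_atTop (by positivity) ?_)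
  exact Real.tendsto_exp_atTop.comp (hw.const_mul_atTop hkpos)

end Asymptotics

namespace ErdosRenyi

variable {n : ℕ} {p : ℝ}

abbrev PossibleEdge (n : ℕ) := {e : Sym2 (Fin n) // ¬ e.IsDiag}

theorem erMeasure_boolCylinder (hp0 : 0 ≤ p) (hp1 : p ≤ 1)
    (P F : Finset (PossibleEdge n)) (h : Disjoint P F) :
    erMeasure n p (boolCylinder P F) = ENNReal.ofReal p ^ #P * ENNReal.ofReal (1 - p) ^ #F := by
  have hq : min p.toNNReal 1 = p.toNNReal := min_eq_left (Real.toNNReal_le_one.mpr hp1)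
  rw [erMeasure, pi_boolCylinder _ P F h, ENNReal.ofReal_sub _ hp0, ENNReal.ofReal_one]
  simp [PMF.bernoulli_apply, hq, ENNReal.ofReal]

theorem erMeasure_boolCylinder_inter_mul (hp0 : 0 ≤ p) (hp1 : p ≤ 1)
    {P F P' F' : Finset (PossibleEdge n)} (hP : Disjoint P P')
    (hPF : Disjoint (P ∪ P') (F ∪ F')) :
    erMeasure n p (boolCylinder P F ∩ boolCylinder P' F') * ENNReal.ofReal (1 - p) ^ #(F ∩ F') =
      erMeasure n p (boolCylinder P F) * erMeasure n p (boolCylinder P' F') := by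
  rw [boolCylinder_inter, erMeasure_boolCylinder hp0 hp1 _ _ hPF,
    erMeasure_boolCylinder hp0 hp1 _ _ (hPF.mono subset_union_left subset_union_left),
    erMeasure_boolCylinder hp0 hp1 _ _ (hPF.mono subset_union_right subset_union_right),
    card_union_of_disjoint hP, mul_assoc, ← pow_add, card_union_add_card_inter]
  ring

theorem erGraph_adj {ω : PossibleEdge n → Bool} {a b : Fin n} (h : ¬ s(a, b).IsDiag) :
    (erGraph n ω).Adj a b ↔ ω ⟨s(a, b), h⟩ = true := by
  rw [erGraph, SimpleGraph.fromEdgeSet_adj]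
  exact ⟨fun ⟨⟨_, hω⟩, _⟩ => hω, fun hω => ⟨⟨h, hω⟩, by simpa using h⟩⟩

def edgesBetween (A B : Finset (Fin n)) : Finset (PossibleEdge n) :=
  {e | ∃ a ∈ A, ∃ b ∈ B, e.1 = s(a, b)}

theorem card_edgesBetween_le (A B : Finset (Fin n)) : #(edgesBetween A B) ≤ #A * #B := by
  calc #(edgesBetween A B) ≤ #((A ×ˢ B).image fun x => s(x.1, x.2)) := by
        refine card_le_card_of_injOn Subtype.val (fun e he => ?_) Subtype.val_injective.injOn
        obtain ⟨a, ha, b, hb, he⟩ := (mem_filter.mp he).2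
        exact mem_image.mpr ⟨(a, b), mem_product.mpr ⟨ha, hb⟩, he.symm⟩
    _ ≤ #A * #B := card_image_le.trans (card_product A B).le

theorem mem_edgesBetween_univ {A : Finset (Fin n)} {e : PossibleEdge n} {a : Fin n}
    (ha : a ∈ A) (hae : a ∈ e.1) : e ∈ edgesBetween A univ :=
  mem_filter.mpr ⟨mem_univ _, a, ha, _, mem_univ _, (Sym2.other_spec hae).symm⟩

def starEdges (S : Finset (Fin n)) : Finset (PossibleEdge n) :=
  {e | ∃ a ∈ S, ∃ b ∈ S, (∀ v ∈ S, a ≤ v) ∧ e.1 = s(a, b)}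

theorem mem_of_mem_starEdges {S : Finset (Fin n)} {e : PossibleEdge n} (he : e ∈ starEdges S)
    {v : Fin n} (hv : v ∈ e.1) : v ∈ S := by
  obtain ⟨a, ha, b, hb, -, he⟩ := (mem_filter.mp he).2
  rw [he, Sym2.mem_iff] at hv
  rcases hv with rfl | rfl <;> assumption

theorem card_starEdges_le (S : Finset (Fin n)) : #(starEdges S) ≤ #S - 1 := by
  rcases S.eq_empty_or_nonempty with rfl | hS
  · simp [starEdges]
  calc #(starEdges S) ≤ #((S.erase (S.min' hS)).image fun b => s(S.min' hS, b)) := by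
        refine card_le_card_of_injOn Subtype.val (fun e he => ?_) Subtype.val_injective.injOn
        obtain ⟨a, ha, b, hb, hmin, he⟩ := (mem_filter.mp he).2
        have hab : a = S.min' hS := le_antisymm (hmin _ (S.min'_mem hS)) (S.min'_le a ha)
        refine mem_image.mpr ⟨b, mem_erase.mpr ⟨fun hb' => e.2 ?_, hb⟩, by rw [he, hab]⟩
        rw [he, hab, hb', Sym2.mk_isDiag_iff]
    _ ≤ #S - 1 := card_image_le.trans (card_erase_of_mem (S.min'_mem hS)).le

theorem starEdges_subset_edgesBetween (S : Finset (Fin n)) : starEdges S ⊆ edgesBetween S univ := by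
  intro e he
  obtain ⟨a, ha, b, -, -, he⟩ := (mem_filter.mp he).2
  exact mem_filter.mpr ⟨mem_univ _, a, ha, b, mem_univ _, he⟩

theorem disjoint_starEdges_edgesBetween {S T : Finset (Fin n)} (hST : Disjoint S T) :
    Disjoint (starEdges S) (edgesBetween T univ) := by
  refine disjoint_left.mpr fun e heS heT => ?_
  obtain ⟨a, ha, b, -, he⟩ := (mem_filter.mp heT).2
  exact disjoint_left.mp hST (mem_of_mem_starEdges heS (by simp [he])) ha

def starComponentEvent (S : Finset (Fin n)) : Set (PossibleEdge n → Bool) :=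
  boolCylinder (starEdges S) (edgesBetween S univ \ starEdges S)

variable {S : Finset (Fin n)} {ω : PossibleEdge n → Bool}

theorem mem_of_adj_of_mem_starComponentEvent (hω : ω ∈ starComponentEvent S) {a b : Fin n}
    (hab : (erGraph n ω).Adj a b) (ha : a ∈ S) : b ∈ S := by
  by_contra hb
  have hd : ¬ s(a, b).IsDiag := by simpa using hab.ne
  have hbad : (⟨s(a, b), hd⟩ : PossibleEdge n) ∈ edgesBetween S univ \ starEdges S :=
    mem_sdiff.mpr ⟨mem_edgesBetween_univ ha (Sym2.mem_mk_left a b),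
      fun h => hb (mem_of_mem_starEdges h (Sym2.mem_mk_right a b))⟩
  simpa [(erGraph_adj hd).mp hab] using hω.2 _ hbad

theorem mem_of_reachable_of_mem_starComponentEvent (hω : ω ∈ starComponentEvent S) {a b : Fin n}
    (hab : (erGraph n ω).Reachable a b) (ha : a ∈ S) : b ∈ S := by
  obtain ⟨walk⟩ := hab
  induction walk with
  | nil => exact ha
  | cons hadj _ ih => exact ih (mem_of_adj_of_mem_starComponentEvent hω hadj ha)

theorem reachable_of_mem_starComponentEvent (hω : ω ∈ starComponentEvent S) {a b : Fin n}
    (ha : a ∈ S) (hb : b ∈ S) : (erGraph n ω).Reachable a b := by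
  have hne : S.Nonempty := ⟨a, ha⟩
  have hmin : ∀ v ∈ S, (erGraph n ω).Reachable (S.min' hne) v := by
    intro v hv
    rcases eq_or_ne (S.min' hne) v with h | h
    · exact h ▸ SimpleGraph.Reachable.refl _
    have hd : ¬ s(S.min' hne, v).IsDiag := by simpa using h
    refine ((erGraph_adj hd).mpr (hω.1 _ ?_)).reachable
    exact mem_filter.mpr ⟨mem_univ _, _, S.min'_mem hne, v, hv, fun u hu => S.min'_le u hu, rfl⟩
  exact (hmin a ha).symm.trans (hmin b hb)

theorem supp_connectedComponentMk_of_mem_starComponentEvent (hω : ω ∈ starComponentEvent S)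
    {v : Fin n} (hv : v ∈ S) : ((erGraph n ω).connectedComponentMk v).supp = S := by
  ext u
  rw [SimpleGraph.ConnectedComponent.mem_supp_iff, SimpleGraph.ConnectedComponent.eq]
  exact ⟨fun h => mem_of_reachable_of_mem_starComponentEvent hω h.symm hv,
    fun h => reachable_of_mem_starComponentEvent hω h hv⟩

theorem numCompsEq_pos_of_mem_starComponentEvent {k : ℕ} (hk : 1 ≤ k) (hS : #S = k)
    (hω : ω ∈ starComponentEvent S) : 0 < numCompsEq (erGraph n ω) k := by
  obtain ⟨v, hv⟩ : S.Nonempty := card_pos.mp (by omega)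
  rw [numCompsEq, Set.ncard_pos (Set.toFinite _)]
  exact ⟨_, by rw [Set.mem_ofPred_eq, supp_connectedComponentMk_of_mem_starComponentEvent hω hv,
    Set.ncard_coe_finset, hS]⟩

theorem starComponentEvent_inter_eq_empty {T : Finset (Fin n)} (hST : S ≠ T)
    (hint : ¬ Disjoint S T) : starComponentEvent S ∩ starComponentEvent T = ∅ := by
  refine Set.eq_empty_iff_forall_notMem.mpr fun ω ⟨hωS, hωT⟩ => hST ?_
  obtain ⟨v, hvS, hvT⟩ := not_disjoint_iff.mp hint
  exact_mod_cast (supp_connectedComponentMk_of_mem_starComponentEvent hωS hvS).symm.trans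
    (supp_connectedComponentMk_of_mem_starComponentEvent hωT hvT)

theorem edgesBetween_univ_inter_subset {S T : Finset (Fin n)} (hST : Disjoint S T) :
    edgesBetween S univ ∩ edgesBetween T univ ⊆ edgesBetween S T := by
  intro e he
  obtain ⟨⟨-, a, ha, b, -, hea⟩, ⟨-, c, hc, d, -, hec⟩⟩ := And.imp mem_filter.mp mem_filter.mp
    (mem_inter.mp he)
  have hac : a ≠ c := fun h => disjoint_left.mp hST ha (h ▸ hc)
  exact mem_filter.mpr ⟨mem_univ _, a, ha, c, hc,
    (Sym2.mem_and_mem_iff hac).mp ⟨by simp [hea], by simp [hec]⟩⟩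

theorem le_erMeasure_starComponentEvent (hp0 : 0 ≤ p) (hp1 : p ≤ 1) (S : Finset (Fin n)) :
    ENNReal.ofReal p ^ (#S - 1) * ENNReal.ofReal (1 - p) ^ (#S * n) ≤
      erMeasure n p (starComponentEvent S) := by
  rw [starComponentEvent, erMeasure_boolCylinder hp0 hp1 _ _ disjoint_sdiff]
  have hcard : #(edgesBetween S univ \ starEdges S) ≤ #S * n :=
    (card_le_card sdiff_subset).trans ((card_edgesBetween_le S univ).trans (by simp))
  gcongr ?_ * ?_
  · exact pow_le_pow_of_le_one (by positivity) (ENNReal.ofReal_le_one.mpr (by linarith))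
      (card_starEdges_le S)
  · exact pow_le_pow_of_le_one (by positivity) (ENNReal.ofReal_le_one.mpr (by linarith)) hcard

theorem erMeasure_starComponentEvent_inter_mul_le (hp0 : 0 ≤ p) (hp1 : p ≤ 1)
    {S T : Finset (Fin n)} (hST : Disjoint S T) :
    erMeasure n p (starComponentEvent S ∩ starComponentEvent T) *
        ENNReal.ofReal (1 - p) ^ (#S * #T) ≤
      erMeasure n p (starComponentEvent S) * erMeasure n p (starComponentEvent T) := by
  have hS := disjoint_starEdges_edgesBetween hST
  have hT := disjoint_starEdges_edgesBetween hST.symm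
  have hcard : #((edgesBetween S univ \ starEdges S) ∩ (edgesBetween T univ \ starEdges T)) ≤
      #S * #T :=
    (card_le_card (inter_subset_inter sdiff_subset sdiff_subset)).trans
      ((card_le_card (edgesBetween_univ_inter_subset hST)).trans (card_edgesBetween_le S T))
  rw [starComponentEvent, starComponentEvent, ← erMeasure_boolCylinder_inter_mul hp0 hp1
    (hS.mono_right (starEdges_subset_edgesBetween T))
    (disjoint_union_left.mpr ⟨disjoint_union_right.mpr ⟨disjoint_sdiff, hS.mono_right sdiff_subset⟩,
      disjoint_union_right.mpr ⟨hT.mono_right sdiff_subset, disjoint_sdiff⟩⟩)]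
  exact mul_le_mul_right
    (pow_le_pow_of_le_one (by positivity) (ENNReal.ofReal_le_one.mpr (by linarith)) hcard) _

instance (n : ℕ) (p : ℝ) : IsProbabilityMeasure (erMeasure n p) := by
  rw [erMeasure]; infer_instance

variable {k : ℕ}

theorem erMeasure_starComponentEvent_inter_le (hp0 : 0 ≤ p) (hp1 : p < 1)
    {S T : Finset (Fin n)} (hS : #S = k) (hT : #T = k) (hST : S ≠ T) :
    erMeasure n p (starComponentEvent S ∩ starComponentEvent T) ≤
      ENNReal.ofReal (((1 - p) ^ (k * k))⁻¹) * erMeasure n p (starComponentEvent S) *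
        erMeasure n p (starComponentEvent T) := by
  by_cases hdisj : Disjoint S T
  · have hpos : 0 < (1 - p) ^ (k * k) := pow_pos (by linarith) _
    rw [ENNReal.ofReal_inv_of_pos hpos, ENNReal.ofReal_pow (by linarith), mul_assoc, mul_comm,
      ← div_eq_mul_inv, ENNReal.le_div_iff_mul_le (Or.inl (by positivity)) (Or.inl (by simp))]
    simpa [hS, hT] using erMeasure_starComponentEvent_inter_mul_le hp0 hp1.le hdisj
  · simp [starComponentEvent_inter_eq_empty hST hdisj]

theorem ofReal_le_sum_erMeasure_starComponentEvent (hp0 : 0 ≤ p) (hp1 : p ≤ 1) :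
    ENNReal.ofReal (n.choose k * p ^ (k - 1) * (1 - p) ^ (k * n)) ≤
      ∑ S ∈ powersetCard k univ, erMeasure n p (starComponentEvent S) := by
  rw [ENNReal.ofReal_mul (by positivity), ENNReal.ofReal_mul (by positivity),
    ENNReal.ofReal_natCast, ENNReal.ofReal_pow hp0, ENNReal.ofReal_pow (by linarith), mul_assoc]
  have hcard : #(powersetCard k (univ : Finset (Fin n))) = n.choose k := by simp
  rw [← hcard, ← nsmul_eq_mul]
  refine card_nsmul_le_sum _ _ _ fun S hS => ?_
  rw [← (mem_powersetCard_univ.mp hS)]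
  exact le_erMeasure_starComponentEvent hp0 hp1 S

theorem inv_inv_add_le_erMeasure_numCompsEq_pos (hk : 1 ≤ k) (hp0 : 0 ≤ p) (hp1 : p < 1) :
    ((∑ S ∈ powersetCard k univ, erMeasure n p (starComponentEvent S))⁻¹ +
        ENNReal.ofReal (((1 - p) ^ (k * k))⁻¹))⁻¹ ≤
      erMeasure n p {ω | 0 < numCompsEq (erGraph n ω) k} := by
  refine (inv_inv_add_le_measure_biUnion _ _ (fun _ => MeasurableSet.of_discrete)
    fun S hS T hT hST => erMeasure_starComponentEvent_inter_le hp0 hp1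
      (mem_powersetCard_univ.mp hS) (mem_powersetCard_univ.mp hT) hST).trans (measure_mono ?_)
  simp only [Set.iUnion_subset_iff]
  exact fun S hS ω hω =>
    numCompsEq_pos_of_mem_starComponentEvent hk (mem_powersetCard_univ.mp hS) hω

end ErdosRenyi

open ErdosRenyi in
theorem prob_comps_size_k_tendsto_one_general (k : ℕ) (hk : 1 ≤ k) (p w : ℕ → ℝ)
    (hw : Tendsto w atTop atTop)
    (hwo : w =o[atTop] fun n : ℕ => Real.log (Real.log n))
    (hΛ : ∀ᶠ n : ℕ in atTop, (n : ℝ) * p n =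
      (1 / (k : ℝ)) * (Real.log n + ((k : ℝ) - 1) * Real.log (Real.log n)) - w n) :
    Tendsto (fun n => erMeasure n (p n) {ω | 0 < numCompsEq (erGraph n ω) k})
      atTop (nhds 1) := by
  have hratio := tendsto_natCast_mul_div_log hk hwo hΛ
  have hp := eventually_mem_Ico_of_tendsto_mul_div_log (by positivity) hratio
  have hsum : Tendsto (fun n => ∑ S ∈ powersetCard k univ,
      erMeasure n (p n) (starComponentEvent S)) atTop (𝓝 ⊤) := by
    refine tendsto_nhds_top_mono (ENNReal.tendsto_ofReal_atTop.comp
      (tendsto_choose_mul_pow_mul_one_sub_pow_atTop hk hw hwo hΛ)) ?_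
    filter_upwards [hp] with n hn
    exact ofReal_le_sum_erMeasure_starComponentEvent hn.1 hn.2.le
  have hcorr : Tendsto (fun n => ENNReal.ofReal (((1 - p n) ^ (k * k))⁻¹)) atTop (𝓝 1) := by
    simpa using ENNReal.tendsto_ofReal ((((tendsto_zero_of_tendsto_mul_div_log hratio).const_sub
      1).pow (k * k)).inv₀ (by norm_num))
  have hlower := tendsto_inv_iff.mpr ((tendsto_inv_iff.mpr hsum).add hcorr)
  rw [ENNReal.inv_top, zero_add, inv_one] at hlower
  refine tendsto_of_tendsto_of_tendsto_of_le_of_le' hlower tendsto_const_nhds ?_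
    (Eventually.of_forall fun n => prob_le_one)
  filter_upwards [hp] with n hn
  exact inv_inv_add_le_erMeasure_numCompsEq_pos hk hn.1 hn.2

/-- For `k ≥ 1` and `w(n) → ∞`, `w(n) = o(log log n)`: if
`n·p(n) = (1/k)(log n + (k−1) log log n) − w(n)` then `P(N_k > 0) → 1`, where `N_k`
is the number of connected components of `G(n,p)` with exactly `k` vertices. -/
theorem prob_comps_size_k_tendsto_one (k : ℕ) (hk : 1 ≤ k) (p w : ℕ → ℝ)
    (hp0 : ∀ n, 0 ≤ p n) (hp1 : ∀ n, p n ≤ 1)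
    (hw : Tendsto w atTop atTop)
    (hwo : w =o[atTop] fun n : ℕ => Real.log (Real.log n))
    (hΛ : ∀ᶠ n : ℕ in atTop, (n : ℝ) * p n =
      (1 / (k : ℝ)) * (Real.log n + ((k : ℝ) - 1) * Real.log (Real.log n)) - w n) :
    Tendsto (fun n => erMeasure n (p n) {ω | 0 < numCompsEq (erGraph n ω) k})
      atTop (nhds 1) :=
  prob_comps_size_k_tendsto_one_general k hk p w hw hwo hΛ
end
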